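/- Let T be a desingularized operator for L of order k with lc_∂(T) = a·g where a ∈ R and g ∈ R[x] is primitive. Then for every F ∈ cont(L) of order j ≥ k, the polynomial σ^{j−k}(g) divides lc_∂(F) in R[x]. -/

import Mathlib

open Polynomial

noncomputable section

/-- `Q_R(x)`, the field of rational functions over the fraction field `Q_R` of `R`,
realized as the fraction field of `R[x]`. -/
abbrev QX (R : Type) [CommRing R] [IsDomain R] := FractionRing (Polynomial R)

/-- Data of an Ore algebra `R[x][∂; σ, δ] ⊆ Q_R(x)[∂; σ, δ]`.
The ring `A` plays the role of `Q_R(x)[∂]`; `ι` embeds the coefficient field,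
`D` is the Ore variable `∂`, subject to the commutation rule `∂·p = σ(p)·∂ + δ(p)`,
and every element of `A` has a unique finite coefficient expansion `Σ ι(cᵢ)·∂^i`. -/
structure OreAlg (R : Type) [CommRing R] [IsDomain R] (A : Type) [Ring A] where
  σ : Polynomial R ≃+* Polynomial R
  σ_fix : ∀ r : R, σ (C r) = C r
  δ : Polynomial R → Polynomial R
  δ_add : ∀ f g, δ (f + g) = δ f + δ g
  δ_linear : ∀ (r : R) (f), δ (C r * f) = C r * δ f
  ι : QX R →+* A
  ι_inj : Function.Injective ι
  D : A
  comm_rule : ∀ p : Polynomial R,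
    D * ι (algebraMap (Polynomial R) (QX R) p)
      = ι (algebraMap (Polynomial R) (QX R) (σ p)) * D
        + ι (algebraMap (Polynomial R) (QX R) (δ p))
  δ_leibniz : ∀ f g, δ (f * g) = σ f * δ g + δ f * g
  coeff : A → ℕ → QX R
  coeff_inj : ∀ P Q : A, (∀ i, coeff P i = coeff Q i) → P = Q
  coeff_add : ∀ P Q i, coeff (P + Q) i = coeff P i + coeff Q i
  coeff_smul : ∀ (f : QX R) (P : A) (i), coeff (ι f * P) i = f * coeff P i
  coeff_bdd : ∀ P : A, ∃ N, ∀ i, N < i → coeff P i = 0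
  coeff_mk : ∀ (N : ℕ) (c : ℕ → QX R), (∀ i, N < i → c i = 0) →
    ∀ j, coeff (∑ i ∈ Finset.range (N + 1), ι (c i) * D ^ i) j = c j

namespace OreAlg

variable {R : Type} [CommRing R] [IsDomain R] {A : Type} [Ring A] (O : OreAlg R A)

/-- The embedding of `R[x]` into the Ore algebra. -/
def ιp (f : Polynomial R) : A := O.ι (algebraMap (Polynomial R) (QX R) f)

/-- The `i`-th `∂`-coefficient of `P` lies in `R[x]`. -/
def PolyCoeff (P : A) (i : ℕ) : Prop :=
  ∃ f : Polynomial R, O.coeff P i = algebraMap (Polynomial R) (QX R) f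

/-- `P` belongs to the subring `R[x][∂]` of `Q_R(x)[∂]`. -/
def InB (P : A) : Prop := ∀ i, O.PolyCoeff P i

/-- The order (degree in `∂`) of an operator. -/
def ord (P : A) : ℕ := sSup {i | O.coeff P i ≠ 0}

/-- The leading coefficient (with respect to `∂`), in `Q_R(x)`. -/
def lc (P : A) : QX R := O.coeff P (O.ord P)

/-- The contraction ideal `cont(L) = Q_R(x)[∂]·L ∩ R[x][∂]`. -/
def cont (L : A) : Set A := {P | O.InB P ∧ ∃ Q : A, P = Q * L}

/-- The `k`-th submodule `M_k(L) = {P ∈ cont(L) : deg_∂ P ≤ k}`. -/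
def M (L : A) (k : ℕ) : Set A := {P | P ∈ O.cont L ∧ O.ord P ≤ k}

/-- The `k`-th coefficient ideal `I_k = {[∂^k]P : P ∈ M_k} ∪ {0}` (as a set of
polynomials; `0` arises from `P = 0`). -/
def Icoeff (L : A) (k : ℕ) : Set (Polynomial R) :=
  {f | ∃ P ∈ O.M L k, O.coeff P k = algebraMap (Polynomial R) (QX R) f}

end OreAlg

/-- `gcd(p, w) = 1` in `R[x]`: every common divisor is a unit. -/
def Copr {R : Type} [CommRing R] (p w : Polynomial R) : Prop :=
  ∀ d : Polynomial R, d ∣ p → d ∣ w → IsUnit d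

namespace OreAlg

variable {R : Type} [CommRing R] [IsDomain R] {A : Type} [Ring A] (O : OreAlg R A)

/-- `P` is a `p`-removing operator for `L` over `R[x]`, of order `k`:
`P·L ∈ R[x][∂]` and `σ^{-k}(lc_∂(P·L)) = (w/(v·p))·lc_∂(L)` with `gcd(p, w) = 1`. -/
def IsRemoving (L : A) (p : Polynomial R) (k : ℕ) (P : A) : Prop :=
  O.ord P = k ∧ O.InB (P * L) ∧
  ∃ w v t l : Polynomial R, v ≠ 0 ∧ Copr p w ∧
    O.lc (P * L) = algebraMap (Polynomial R) (QX R) t ∧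
    O.lc L = algebraMap (Polynomial R) (QX R) l ∧
    (⇑O.σ.symm)^[k] t * (v * p) = w * l

/-- `p` is removable from `L` (at some order). -/
def Removable (L : A) (p : Polynomial R) : Prop :=
  ∃ k P, O.IsRemoving L p k P

/-- Factorization data for `lc_∂(L) = c·p₁^{e₁}⋯p_m^{e_m}`, with `c ∈ R` and the
`pᵢ ∈ R[x] \ R` irreducible and pairwise coprime; `L` has order `r > 0`. -/
def Factored (L : A) (r m : ℕ) (c : R) (p : Fin m → Polynomial R)
    (e : Fin m → ℕ) : Prop :=
  O.ord L = r ∧ 0 < r ∧ c ≠ 0 ∧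
  O.lc L = algebraMap (Polynomial R) (QX R) (C c * ∏ i, p i ^ e i) ∧
  (∀ i, Irreducible (p i) ∧ 0 < (p i).natDegree) ∧
  (∀ i j, i ≠ j → Copr (p i) (p j))

/-- `T` is a desingularized operator for `L`: `T ∈ cont(L)` and
`σ^{r-k}(lc_∂(T)) = (a/(b·∏ pᵢ^{kᵢ}))·lc_∂(L)` with `a, b ∈ R`, where each
`pᵢ^{dᵢ}` with `dᵢ > kᵢ` is non-removable from `L`. -/
def Desing (L : A) (r m : ℕ) (c : R) (p : Fin m → Polynomial R)
    (e : Fin m → ℕ) (T : A) : Prop :=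
  T ∈ O.cont L ∧ r ≤ O.ord T ∧
  ∃ (a b : R) (k : Fin m → ℕ) (t l : Polynomial R),
    b ≠ 0 ∧ (∀ i, k i ≤ e i) ∧
    O.lc T = algebraMap (Polynomial R) (QX R) t ∧
    O.lc L = algebraMap (Polynomial R) (QX R) l ∧
    (⇑O.σ.symm)^[O.ord T - r] t * (C b * ∏ i, p i ^ k i) = C a * l ∧
    (∀ i (d : ℕ), k i < d → ¬ O.Removable L (p i ^ d))

/-- The left ideal of `R[x][∂]` generated by a set `S ⊆ R[x][∂]`. -/
def LIdeal (S : Set A) : Set A :=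
  {P | ∃ (n : ℕ) (co s : Fin n → A), (∀ i, O.InB (co i)) ∧ (∀ i, s i ∈ S) ∧
    P = ∑ i, co i * s i}

/-- The constant `a ∈ R` viewed inside the Ore algebra. -/
def cst (a : R) : A := O.ιp (C a)

/-- The saturation `I : a^∞ = {P ∈ R[x][∂] : aⁱ·P ∈ I for some i}`. -/
def sat (I : Set A) (a : R) : Set A :=
  {P | O.InB P ∧ ∃ i : ℕ, O.cst a ^ i * P ∈ I}

end OreAlg

/-!
Write `F = Q·L` with `n = ord Q`. Since `L` has polynomial coefficients,
`lc(Q·L) = lc(Q)·σⁿ(lc L)`, so `ord F = n + r`. If `p_i` divided `σ⁻ⁿ(lc F)` exactly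
`m < e_i - k_i` times, `Q` itself would remove `p_i^(e_i - m)` from `L`, contradicting
desingularization; hence `∏ p_i^(e_i - k_i)` divides `σ⁻ⁿ(lc F)`. The defining identity of `T`
and Gauss's lemma give `σ^(r-k)(g) ∣ ∏ p_i^(e_i - k_i)`, and applying `σⁿ` yields
`σ^(j-k)(g) ∣ lc F`.
-/

lemma copr_iff_isRelPrime {R : Type} [CommRing R] {p w : R[X]} : Copr p w ↔ IsRelPrime p w :=
  ⟨fun h d => h d, fun h d => @h d⟩

namespace Polynomial

variable {R : Type*} [CommRing R] [IsDomain R]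

lemma IsPrimitive.isRelPrime_C {g : R[X]} (hg : g.IsPrimitive) {v : R} (hv : v ≠ 0) :
    IsRelPrime g (C v) := by
  intro d hdg hdv
  have hd : d = C (d.coeff 0) :=
    eq_C_of_natDegree_eq_zero <| by simpa using natDegree_le_of_dvd hdv (C_ne_zero.mpr hv)
  rw [hd] at hdg ⊢
  exact isUnit_C.mpr (hg _ hdg)

lemma IsPrimitive.dvd_of_C_mul_eq_C_mul [UniqueFactorizationMonoid R] {g P : R[X]} {u v : R}
    (hg : g.IsPrimitive) (hu : u ≠ 0) (h : C u * g = C v * P) : g ∣ P := by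
  have hv : v ≠ 0 := by
    rintro rfl
    simp [hu, hg.ne_zero] at h
  exact (hg.isRelPrime_C hv).dvd_of_dvd_mul_left (h ▸ dvd_mul_left g (C u))

end Polynomial

namespace OreAlg

variable {R : Type} [CommRing R] [IsDomain R] {A : Type} [Ring A] (O : OreAlg R A)

lemma iterate_σ_C (n : ℕ) (r : R) : (⇑O.σ)^[n] (C r) = C r :=
  Function.iterate_fixed (O.σ_fix r) n

lemma iterate_σ_symm_C (n : ℕ) (r : R) : (⇑O.σ.symm)^[n] (C r) = C r :=
  Function.iterate_fixed (O.σ.symm_apply_eq.mpr (O.σ_fix r).symm) n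

lemma iterate_σ_iterate_σ_symm (n : ℕ) (f : R[X]) :
    (⇑O.σ)^[n] ((⇑O.σ.symm)^[n] f) = f :=
  Function.LeftInverse.iterate O.σ.apply_symm_apply n f

lemma iterate_σ_dvd {f g : R[X]} (h : f ∣ g) (n : ℕ) : (⇑O.σ)^[n] f ∣ (⇑O.σ)^[n] g := by
  obtain ⟨z, rfl⟩ := h
  exact ⟨_, iterate_map_mul O.σ n f z⟩

lemma isPrimitive_of_iterate_σ {g : R[X]} (n : ℕ) (h : ((⇑O.σ)^[n] g).IsPrimitive) :
    g.IsPrimitive :=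
  fun r hr => h r (O.iterate_σ_C n r ▸ O.iterate_σ_dvd hr n)

def coeffAddHom (j : ℕ) : A →+ QX R where
  toFun P := O.coeff P j
  map_zero' := by simpa using O.coeff_add 0 0 j
  map_add' P Q := O.coeff_add P Q j

lemma coeff_zero (j : ℕ) : O.coeff 0 j = 0 := (O.coeffAddHom j).map_zero

lemma lc_zero : O.lc (0 : A) = 0 := O.coeff_zero _

lemma coeff_neg (P : A) (j : ℕ) : O.coeff (-P) j = -O.coeff P j :=
  (O.coeffAddHom j).map_neg P

lemma coeff_sub (P Q : A) (j : ℕ) : O.coeff (P - Q) j = O.coeff P j - O.coeff Q j :=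
  (O.coeffAddHom j).map_sub P Q

lemma coeff_sum {ι : Type*} (s : Finset ι) (P : ι → A) (j : ℕ) :
    O.coeff (∑ i ∈ s, P i) j = ∑ i ∈ s, O.coeff (P i) j :=
  map_sum (O.coeffAddHom j) P s

lemma coeff_ι_mul_D_pow (x : QX R) (i j : ℕ) :
    O.coeff (O.ι x * O.D ^ i) j = if j = i then x else 0 := by
  have h := O.coeff_mk i (fun l => if l = i then x else 0) (fun l hl => if_neg hl.ne') j
  simpa [apply_ite O.ι, ite_mul] using h

lemma bddAbove_coeff_ne_zero (P : A) : BddAbove {i | O.coeff P i ≠ 0} := by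
  obtain ⟨N, hN⟩ := O.coeff_bdd P
  exact ⟨N, fun i hi => not_lt.mp fun h => hi (hN i h)⟩

lemma coeff_eq_zero_of_ord_lt {P : A} {i : ℕ} (h : O.ord P < i) : O.coeff P i = 0 := by
  by_contra hi
  exact h.not_ge (le_csSup (O.bddAbove_coeff_ne_zero P) hi)

lemma lc_ne_zero {P : A} (hP : P ≠ 0) : O.lc P ≠ 0 := by
  have hne : {i | O.coeff P i ≠ 0}.Nonempty := by
    by_contra h
    exact hP (O.coeff_inj _ _ fun i => by
      rw [O.coeff_zero]; by_contra hi; exact h ⟨i, hi⟩)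
  exact Nat.sSup_mem hne (O.bddAbove_coeff_ne_zero P)

lemma ord_zero : O.ord (0 : A) = 0 := by
  simp [ord, coeff_zero]

lemma ord_eq_of_coeff {P : A} {N : ℕ} (hN : O.coeff P N ≠ 0)
    (h : ∀ i, N < i → O.coeff P i = 0) : O.ord P = N :=
  le_antisymm (csSup_le ⟨N, hN⟩ fun i hi => not_lt.mp fun hlt => hi (h i hlt))
    (le_csSup (O.bddAbove_coeff_ne_zero P) hN)

lemma eq_sum_of_coeff_eq_zero {P : A} {N : ℕ} (h : ∀ i, N ≤ i → O.coeff P i = 0) :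
    P = ∑ i ∈ Finset.range N, O.ι (O.coeff P i) * O.D ^ i := by
  refine O.coeff_inj _ _ fun j => ?_
  simp only [coeff_sum, coeff_ι_mul_D_pow, Finset.sum_ite_eq, Finset.mem_range]
  split_ifs with hj
  · rfl
  · exact h j (not_lt.mp hj)

def polyOfOrdLT (N : ℕ) : AddSubgroup A where
  carrier := {P | O.InB P ∧ ∀ i, N ≤ i → O.coeff P i = 0}
  zero_mem' := ⟨fun i => ⟨0, by rw [O.coeff_zero, map_zero]⟩, fun i _ => O.coeff_zero i⟩
  add_mem' := by
    rintro P Q ⟨hP, hP'⟩ ⟨hQ, hQ'⟩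
    refine ⟨fun i => ?_, fun i hi => by rw [O.coeff_add, hP' i hi, hQ' i hi, add_zero]⟩
    obtain ⟨f, hf⟩ := hP i
    obtain ⟨g, hg⟩ := hQ i
    exact ⟨f + g, by rw [O.coeff_add, hf, hg, map_add]⟩
  neg_mem' := by
    rintro P ⟨hP, hP'⟩
    refine ⟨fun i => ?_, fun i hi => by rw [O.coeff_neg, hP' i hi, neg_zero]⟩
    obtain ⟨f, hf⟩ := hP i
    exact ⟨-f, by rw [O.coeff_neg, hf, map_neg]⟩

lemma ιp_mul_D_pow_mem (f : R[X]) {i N : ℕ} (h : i < N) :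
    O.ιp f * O.D ^ i ∈ O.polyOfOrdLT N := by
  refine ⟨fun j => ⟨if j = i then f else 0, ?_⟩, fun j hj => ?_⟩
  · rw [ιp, coeff_ι_mul_D_pow]
    split_ifs <;> simp
  · rw [ιp, coeff_ι_mul_D_pow, if_neg (by omega)]

lemma D_mul_ιp_mul_D_pow (f : R[X]) (i : ℕ) :
    O.D * (O.ιp f * O.D ^ i) = O.ιp (O.σ f) * O.D ^ (i + 1) + O.ιp (O.δ f) * O.D ^ i := by
  rw [← mul_assoc, ιp, O.comm_rule, add_mul, mul_assoc, ← pow_succ']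
  rfl

lemma D_mul_mem {P : A} {N : ℕ} (hP : P ∈ O.polyOfOrdLT N) :
    O.D * P ∈ O.polyOfOrdLT (N + 1) := by
  choose c hc using hP.1
  rw [O.eq_sum_of_coeff_eq_zero hP.2, Finset.mul_sum]
  refine sum_mem fun i hi => ?_
  have hiN := Finset.mem_range.mp hi
  rw [hc i]
  change O.D * (O.ιp (c i) * O.D ^ i) ∈ _
  rw [D_mul_ιp_mul_D_pow]
  exact add_mem (O.ιp_mul_D_pow_mem _ (by omega)) (O.ιp_mul_D_pow_mem _ (by omega))

lemma D_pow_mul_sub_mem {L : A} {l : R[X]} {r : ℕ}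
    (hL : L - O.ιp l * O.D ^ r ∈ O.polyOfOrdLT r) (n : ℕ) :
    O.D ^ n * L - O.ιp ((⇑O.σ)^[n] l) * O.D ^ (n + r) ∈ O.polyOfOrdLT (n + r) := by
  induction n with
  | zero => simpa using hL
  | succ n ih =>
    have key : O.D ^ (n + 1) * L - O.ιp ((⇑O.σ)^[n + 1] l) * O.D ^ (n + 1 + r)
        = O.D * (O.D ^ n * L - O.ιp ((⇑O.σ)^[n] l) * O.D ^ (n + r))
          + O.ιp (O.δ ((⇑O.σ)^[n] l)) * O.D ^ (n + r) := by
      rw [mul_sub, D_mul_ιp_mul_D_pow, Function.iterate_succ_apply', pow_succ', mul_assoc,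
        show n + 1 + r = n + r + 1 by omega]
      abel
    rw [key, show n + 1 + r = n + r + 1 by omega]
    exact add_mem (O.D_mul_mem ih) (O.ιp_mul_D_pow_mem _ (by omega))

lemma sub_ιp_mul_D_pow_ord_mem {L : A} (hLB : O.InB L) {l : R[X]}
    (hl : O.lc L = algebraMap R[X] (QX R) l) :
    L - O.ιp l * O.D ^ O.ord L ∈ O.polyOfOrdLT (O.ord L) := by
  have hL : L ∈ O.polyOfOrdLT (O.ord L + 1) := ⟨hLB, fun i hi => O.coeff_eq_zero_of_ord_lt hi⟩
  refine ⟨(sub_mem hL (O.ιp_mul_D_pow_mem l (O.ord L).lt_succ_self)).1, fun i hi => ?_⟩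
  rw [coeff_sub, ιp, coeff_ι_mul_D_pow]
  rcases hi.eq_or_lt with rfl | hi
  · rw [if_pos rfl, ← hl, lc, sub_self]
  · rw [if_neg hi.ne', O.coeff_eq_zero_of_ord_lt hi, sub_zero]

lemma coeff_D_pow_mul_of_le {L : A} (hLB : O.InB L) {l : R[X]}
    (hl : O.lc L = algebraMap R[X] (QX R) l) {i j : ℕ} (hj : i + O.ord L ≤ j) :
    O.coeff (O.D ^ i * L) j
      = if j = i + O.ord L then algebraMap R[X] (QX R) ((⇑O.σ)^[i] l) else 0 := by
  have h := (O.D_pow_mul_sub_mem (O.sub_ιp_mul_D_pow_ord_mem hLB hl) i).2 j hj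
  rwa [coeff_sub, sub_eq_zero, ιp, coeff_ι_mul_D_pow] at h

lemma ord_mul {Q L : A} (hQ : Q ≠ 0) (hL : L ≠ 0) (hLB : O.InB L) :
    O.ord (Q * L) = O.ord Q + O.ord L := by
  set n := O.ord Q
  set r := O.ord L
  obtain ⟨l, hl⟩ := hLB r
  have hl0 : l ≠ 0 := by
    rintro rfl
    exact O.lc_ne_zero hL (by rw [lc, hl, map_zero])
  have hQL : ∀ j, n + r ≤ j → O.coeff (Q * L) j = ∑ i ∈ Finset.range (n + 1),
      O.coeff Q i * if j = i + r then algebraMap R[X] (QX R) ((⇑O.σ)^[i] l) else 0 := by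
    intro j hj
    conv_lhs => rw [O.eq_sum_of_coeff_eq_zero (P := Q) (N := n + 1)
      fun i hi => O.coeff_eq_zero_of_ord_lt (by omega), Finset.sum_mul]
    rw [coeff_sum]
    refine Finset.sum_congr rfl fun i hi => ?_
    rw [Finset.mem_range] at hi
    rw [mul_assoc, coeff_smul, O.coeff_D_pow_mul_of_le hLB hl (by omega)]
  refine O.ord_eq_of_coeff ?_ fun j hj => ?_
  · rw [hQL _ le_rfl, Finset.sum_eq_single_of_mem n (Finset.self_mem_range_succ n)
      fun i hi hin => by rw [if_neg (by rw [Finset.mem_range] at hi; omega), mul_zero], if_pos rfl]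
    refine mul_ne_zero (O.lc_ne_zero hQ)
      ((map_ne_zero_iff _ (IsFractionRing.injective R[X] (QX R))).mpr fun h => hl0 ?_)
    exact O.σ.injective.iterate n (h.trans (iterate_map_zero O.σ n).symm)
  · rw [hQL j hj.le]
    refine Finset.sum_eq_zero fun i hi => ?_
    rw [Finset.mem_range] at hi
    rw [if_neg (by omega), mul_zero]

section Factorial

variable [UniqueFactorizationMonoid R]

lemma pow_dvd_of_not_isRemoving {L Q : A} {p l f : R[X]} {e k : ℕ} (hp : Irreducible p)
    (hl : O.lc L = algebraMap R[X] (QX R) l) (hl0 : l ≠ 0) (hpl : p ^ e ∣ l)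
    (hQL : O.InB (Q * L)) (hf : O.lc (Q * L) = algebraMap R[X] (QX R) f)
    (hnr : ∀ d, k < d → ¬ O.IsRemoving L (p ^ d) (O.ord Q) Q) :
    p ^ (e - k) ∣ (⇑O.σ.symm)^[O.ord Q] f := by
  rcases eq_or_ne ((⇑O.σ.symm)^[O.ord Q] f) 0 with hf0 | hf0
  · rw [hf0]
    exact dvd_zero _
  obtain ⟨m, w, hpw, hfw⟩ := WfDvdMonoid.max_power_factor hf0 hp
  by_cases hm : e - k ≤ m
  · exact (pow_dvd_pow p hm).trans ⟨w, hfw⟩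
  obtain ⟨v, rfl⟩ := hpl
  -- `Q` itself removes `p ^ (e - m)` from `L`.
  refine absurd ?_ (hnr (e - m) (by omega))
  refine ⟨rfl, hQL, w, v, f, p ^ e * v, right_ne_zero_of_mul hl0,
    copr_iff_isRelPrime.mpr (hp.isRelPrime_iff_not_dvd.mpr hpw).pow_left, hf, hl, ?_⟩
  calc (⇑O.σ.symm)^[O.ord Q] f * (v * p ^ (e - m)) = w * (p ^ (m + (e - m)) * v) := by
        rw [hfw]; ring
    _ = w * (p ^ e * v) := by rw [Nat.add_sub_cancel' (by omega)]

lemma prod_pow_dvd_of_not_removable {L Q : A} {r m : ℕ} {c : R} {p : Fin m → R[X]}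
    {e k : Fin m → ℕ} {f : R[X]} (hL : L ≠ 0) (hF : O.Factored L r m c p e)
    (hnr : ∀ i d, k i < d → ¬ O.Removable L (p i ^ d))
    (hQL : O.InB (Q * L)) (hf : O.lc (Q * L) = algebraMap R[X] (QX R) f) :
    (∏ i, p i ^ (e i - k i)) ∣ (⇑O.σ.symm)^[O.ord Q] f := by
  obtain ⟨-, -, -, hl, hirr, hcopr⟩ := hF
  refine Fintype.prod_dvd_of_isRelPrime
    (fun i j hij => (copr_iff_isRelPrime.mp (hcopr i j hij)).pow) fun i => ?_
  refine O.pow_dvd_of_not_isRemoving (hirr i).1 hl (fun h0 => O.lc_ne_zero hL ?_) ?_ hQL hf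
    fun d hd h => hnr i d hd ⟨_, _, h⟩
  · rw [hl, h0, map_zero]
  · exact dvd_mul_of_dvd_right (Finset.dvd_prod_of_mem _ (Finset.mem_univ i)) _

lemma Desing.exists_iterate_σ_symm_dvd_prod {L T : A} {r m : ℕ} {c a : R}
    {p : Fin m → R[X]} {e : Fin m → ℕ} {g : R[X]}
    (hF : O.Factored L r m c p e) (hT : O.Desing L r m c p e T) (hg : g.IsPrimitive)
    (hlcT : O.lc T = algebraMap R[X] (QX R) (C a * g)) :
    ∃ k : Fin m → ℕ, (∀ i d, k i < d → ¬ O.Removable L (p i ^ d)) ∧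
      (⇑O.σ.symm)^[O.ord T - r] g ∣ ∏ i, p i ^ (e i - k i) := by
  obtain ⟨-, hr0, -, hlcL, hirr, -⟩ := hF
  obtain ⟨-, hrT, a', b, k, t, l, hb, hke, hlcT', hlcL', heq, hnr⟩ := hT
  refine ⟨k, hnr, ?_⟩
  have halg := IsFractionRing.injective R[X] (QX R)
  obtain rfl : t = C a * g := halg (hlcT'.symm.trans hlcT)
  obtain rfl : l = C c * ∏ i, p i ^ e i := halg (hlcL'.symm.trans hlcL)
  have hT0 : T ≠ 0 := by
    rintro rfl
    rw [ord_zero] at hrT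
    omega
  have ha : a ≠ 0 := by
    rintro rfl
    exact O.lc_ne_zero hT0 (by rw [hlcT, C_0, zero_mul, map_zero])
  have hsplit : ∏ i, p i ^ e i = (∏ i, p i ^ (e i - k i)) * ∏ i, p i ^ k i := by
    rw [← Finset.prod_mul_distrib]
    exact Finset.prod_congr rfl fun i _ => by rw [← pow_add, Nat.sub_add_cancel (hke i)]
  have hk0 : ∏ i, p i ^ k i ≠ 0 :=
    Finset.prod_ne_zero_iff.mpr fun i _ => pow_ne_zero _ (hirr i).1.ne_zero
  have hg' := O.isPrimitive_of_iterate_σ (O.ord T - r)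
    (g := (⇑O.σ.symm)^[O.ord T - r] g) (by rwa [iterate_σ_iterate_σ_symm])
  refine hg'.dvd_of_C_mul_eq_C_mul (v := a' * c) (mul_ne_zero ha hb) (mul_right_cancel₀ hk0 ?_)
  rw [iterate_map_mul, iterate_σ_symm_C, hsplit] at heq
  simp only [map_mul]
  linear_combination heq

end Factorial

end OreAlg

/-- if `T` is a desingularized operator of order `k` with
`lc_∂(T) = a·g` (`a ∈ R`, `g` primitive), then for every `F ∈ cont(L)` of order
`j ≥ k`, `σ^{j-k}(g)` divides `lc_∂(F)` in `R[x]`. -/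
theorem desing_lc_divides {R : Type} [CommRing R] [IsDomain R]
    [IsPrincipalIdealRing R] {A : Type} [Ring A] (O : OreAlg R A)
    (L : A) (hL : L ≠ 0) (hLB : O.InB L)
    (r m : ℕ) (c : R) (p : Fin m → Polynomial R) (e : Fin m → ℕ)
    (hF : O.Factored L r m c p e)
    (T : A) (hT : O.Desing L r m c p e T)
    (k : ℕ) (hk : O.ord T = k)
    (a : R) (g : Polynomial R) (hg : g.IsPrimitive)
    (hlcT : O.lc T = algebraMap (Polynomial R) (QX R) (C a * g)) :
    ∀ F ∈ O.cont L, ∀ j : ℕ, O.ord F = j → k ≤ j →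
      ∀ f : Polynomial R, O.lc F = algebraMap (Polynomial R) (QX R) f →
        (⇑O.σ)^[j - k] g ∣ f := by
  rintro F ⟨hFB, Q, rfl⟩ j hj hkj f hf
  subst hk
  obtain ⟨kk, hnr, hg'⟩ := OreAlg.Desing.exists_iterate_σ_symm_dvd_prod O hF hT hg hlcT
  rcases eq_or_ne Q 0 with rfl | hQ
  · obtain rfl : f = 0 := IsFractionRing.injective R[X] (QX R) <| by
      rw [← hf, zero_mul, map_zero, O.lc_zero]
    exact dvd_zero _
  have hj' : j = O.ord Q + r := by rw [← hj, O.ord_mul hQ hL hLB, hF.1]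
  have hrT := hT.2.1
  calc (⇑O.σ)^[j - O.ord T] g
      = (⇑O.σ)^[O.ord Q] ((⇑O.σ.symm)^[O.ord T - r] g) := by
        rw [show O.ord Q = (j - O.ord T) + (O.ord T - r) by omega, Function.iterate_add_apply,
          O.iterate_σ_iterate_σ_symm]
    _ ∣ (⇑O.σ)^[O.ord Q] ((⇑O.σ.symm)^[O.ord Q] f) :=
        O.iterate_σ_dvd (hg'.trans (O.prod_pow_dvd_of_not_removable hL hF hnr hFB hf)) _
    _ = f := O.iterate_σ_iterate_σ_symm _ f
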